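/- In the counter BPA system Δ₀ restricted to variables { B_1^1, …, B_n^1 } and { Z_1^1, …, Z_n^1 }, for a process γ with Var(γ) ⊆ { B_1^1, …, B_n^1 }, the following are equivalent: (1) Z_1^1 Z_2^1 … Z_n^1 γ ≃ γ; (2) Z_1^1 Z_2^1 … Z_n^1 γ ≈ γ; (3) Var(γ) = { B_1^1, …, B_n^1 }. -/

import Mathlib

/-- Silent-step closure (⇒): reflexive transitive closure of τ-transitions. -/
def SilentStar {S A : Type*} (trans : S → A → S → Prop) (tau : A) : S → S → Prop :=
  Relation.ReflTransGen (fun p q => trans p tau q)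

/-- A symmetric relation is a branching bisimulation. -/
def IsBranchingBisim {S A : Type*} (trans : S → A → S → Prop) (tau : A)
    (R : S → S → Prop) : Prop :=
  Symmetric R ∧
  ∀ a b a' (l : A), R a b → trans a l a' →
    (l = tau ∧ R a' b) ∨
    ∃ b'' b', SilentStar trans tau b b'' ∧ trans b'' l b' ∧ R a b'' ∧ R a' b'

/-- A symmetric relation is a weak bisimulation. -/
def IsWeakBisim {S A : Type*} (trans : S → A → S → Prop) (tau : A)
    (R : S → S → Prop) : Prop :=
  Symmetric R ∧
  ∀ a b a' (l : A), R a b → trans a l a' →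
    (l = tau ∧ R a' b) ∨
    ∃ g1 g2 b', SilentStar trans tau b g1 ∧ trans g1 l g2 ∧
      SilentStar trans tau g2 b' ∧ R a' b'

/-- Branching bisimilarity: the union of all branching bisimulations. -/
def BrBisim {S A : Type*} (trans : S → A → S → Prop) (tau : A) (a b : S) : Prop :=
  ∃ R, IsBranchingBisim trans tau R ∧ R a b

/-- Weak bisimilarity: the union of all weak bisimulations. -/
def WkBisim {S A : Type*} (trans : S → A → S → Prop) (tau : A) (a b : S) : Prop :=
  ∃ R, IsWeakBisim trans tau R ∧ R a b

/-- One-step transition of a BPA system: X β →λ α β whenever X →λ α is a rule. -/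
def BPA.Trans {V A : Type*} (rules : V → A → List V → Prop)
    (p : List V) (l : A) (q : List V) : Prop :=
  ∃ X α β, p = X :: β ∧ rules X l α ∧ q = α ++ β

/-- A step by some action. -/
def BPA.Step {V A : Type*} (rules : V → A → List V → Prop) (p q : List V) : Prop :=
  ∃ l, BPA.Trans rules p l q

/-- Reachability in a BPA system. -/
def BPA.Reach {V A : Type*} (rules : V → A → List V → Prop) : List V → List V → Prop :=
  Relation.ReflTransGen (BPA.Step rules)

/-- A BPA system is normed if every variable can reach the empty process ε. -/
def BPA.Normed {V A : Type*} (rules : V → A → List V → Prop) : Prop :=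
  ∀ X : V, BPA.Reach rules [X] []

/-- The redundant set Rd(α) = { X | Xα ≃ α }. -/
def BPA.Rd {V A : Type*} (rules : V → A → List V → Prop) (tau : A) (α : List V) : Set V :=
  {X | BrBisim (BPA.Trans rules) tau (X :: α) α}

/-- Variables of the counter system Δ₀. -/
inductive CVar (n : ℕ) : Type
  | B (i : Fin n) (b : Bool)
  | Z (i : Fin n) (b : Bool)
  | BP (i : Fin n) (b : Bool) (j : Fin n) (b' : Bool)
  deriving DecidableEq

/-- Actions of the counter system Δ₀. -/
inductive CAct (n : ℕ) : Type
  | tau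
  | d
  | a (i : Fin n) (b : Bool)
  deriving DecidableEq

/-- The rules of the counter system Δ₀. -/
inductive CRule {n : ℕ} : CVar n → CAct n → List (CVar n) → Prop
  | z_a (i : Fin n) (b : Bool) : CRule (.Z i b) (.a i b) []
  | z_tau (i : Fin n) (b : Bool) : CRule (.Z i b) .tau []
  | b_self (i : Fin n) (b : Bool) : CRule (.B i b) (.a i b) [.B i b]
  | b_d (i : Fin n) (b : Bool) : CRule (.B i b) .d []
  | b_obs (i : Fin n) (b : Bool) (j : Fin n) (b' : Bool) :
      j ≠ i → CRule (.B i b) (.a j b') [.BP i b j b']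
  | bp_self (i : Fin n) (b : Bool) (j : Fin n) (b' : Bool) :
      j ≠ i → CRule (.BP i b j b') (.a i b) [.BP i b j b']
  | bp_d (i : Fin n) (b : Bool) (j : Fin n) (b' : Bool) :
      j ≠ i → CRule (.BP i b j b') .d [.Z j b']
  | bp_obs (i : Fin n) (b : Bool) (j : Fin n) (b' : Bool) (j' : Fin n) (b'' : Bool) :
      j ≠ i → j' ≠ i → CRule (.BP i b j b') (.a j' b'') [.BP i b j' b'']

/-- Branching bisimilarity on processes of Δ₀. -/
def CBisim {n : ℕ} (p q : List (CVar n)) : Prop :=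
  BrBisim (BPA.Trans (@CRule n)) CAct.tau p q

/-- Weak bisimilarity on processes of Δ₀. -/
def CWeak {n : ℕ} (p q : List (CVar n)) : Prop :=
  WkBisim (BPA.Trans (@CRule n)) CAct.tau p q

/-!
Direction (3) ⇒ (1): if every `Z_j` of the prefix has its `B_j` somewhere in `γ`, then the
prefix is invisible. `Z_j` can always be skipped by `τ`, and its action `a_j` is mimicked by `γ`:
the head `B_i` of `γ` answers `a_j` either by itself (`j = i`) or by moving to `B_i(j)`, which
behaves like `B_i` as long as `B_j` still occurs further down, since its eventual `d` leaves
`Z_j`, which is again invisible. Direction (2) ⇒ (3): if `B_i` does not occur in `γ`, let the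
prefix perform `a_i` from `Z_i`. A `B`-word `B_m β` can answer only by `B_m → B_m(i)`; that
process can do `d` into `Z_i β`, which the prefix side can only answer by consuming `B_m`,
leaving `Z_i β` against `β`. Descending along `γ`, we end with `Z_i` against `ε`, which cannot
answer `a_i`.
-/

section Transitions

variable {S A : Type*} {trans : S → A → S → Prop} {tau : A}

def WeakTrans (trans : S → A → S → Prop) (tau : A) (p : S) (l : A) (q : S) : Prop :=
  ∃ g₁ g₂, SilentStar trans tau p g₁ ∧ trans g₁ l g₂ ∧ SilentStar trans tau g₂ q

/-- `q` answers the step `p →l p'` as required of a branching bisimulation `R`. -/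
def BranchingAnswer (trans : S → A → S → Prop) (tau : A) (R : S → S → Prop)
    (p : S) (l : A) (p' q : S) : Prop :=
  (l = tau ∧ R p' q) ∨
    ∃ q'' q', SilentStar trans tau q q'' ∧ trans q'' l q' ∧ R p q'' ∧ R p' q'

theorem BranchingAnswer.of_trans {R : S → S → Prop} {p p' q q' : S} {l : A}
    (hpq : R p q) (hq : trans q l q') (hpq' : R p' q') :
    BranchingAnswer trans tau R p l p' q :=
  Or.inr ⟨q, q', .refl, hq, hpq, hpq'⟩

theorem isBranchingBisim_symmGen {P : S → S → Prop}
    (forth : ∀ {p q p' l}, P p q → trans p l p' →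
      BranchingAnswer trans tau (Relation.SymmGen P) p l p' q)
    (back : ∀ {p q q' l}, P p q → trans q l q' →
      BranchingAnswer trans tau (Relation.SymmGen P) q l q' p) :
    IsBranchingBisim trans tau (Relation.SymmGen P) :=
  ⟨fun _ _ h => h.symm, fun _ _ _ _ h ht => h.elim (forth · ht) (back · ht)⟩

theorem IsBranchingBisim.isWeakBisim {R : S → S → Prop}
    (hR : IsBranchingBisim trans tau R) : IsWeakBisim trans tau R := by
  refine ⟨hR.1, fun p q p' l hpq hp => ?_⟩
  rcases hR.2 p q p' l hpq hp with h | ⟨q'', q', hq'', hq', -, hpq'⟩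
  · exact Or.inl h
  · exact Or.inr ⟨q'', q', q', hq'', hq', .refl, hpq'⟩

theorem BrBisim.wkBisim {p q : S} (h : BrBisim trans tau p q) : WkBisim trans tau p q :=
  let ⟨R, hR, hpq⟩ := h
  ⟨R, hR.isWeakBisim, hpq⟩

theorem IsWeakBisim.exists_weakTrans {R : S → S → Prop} (hR : IsWeakBisim trans tau R)
    {p q p' : S} {l : A} (hpq : R p q) (hp : trans p l p') (hl : l ≠ tau) :
    ∃ q', WeakTrans trans tau q l q' ∧ R p' q' := by
  rcases hR.2 p q p' l hpq hp with ⟨rfl, -⟩ | ⟨g₁, g₂, q', h₁, h₂, h₃, hpq'⟩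
  · exact absurd rfl hl
  · exact ⟨q', ⟨g₁, g₂, h₁, h₂, h₃⟩, hpq'⟩

theorem SilentStar.eq_of_forall_not_trans {p x : S} (hp : ∀ q, ¬ trans p tau q)
    (h : SilentStar trans tau p x) : x = p := by
  rcases Relation.ReflTransGen.cases_head h with rfl | ⟨q, hq, -⟩
  · rfl
  · exact absurd hq (hp q)

theorem IsWeakBisim.rel_of_trans_tau {R : S → S → Prop} (hR : IsWeakBisim trans tau R)
    {p q p' : S} (hq : ∀ q', ¬ trans q tau q') (hpq : R p q) (hp : trans p tau p') :
    R p' q := by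
  rcases hR.2 p q p' tau hpq hp with ⟨-, h⟩ | ⟨g₁, g₂, -, h₁, h₂, -, -⟩
  · exact h
  · rw [h₁.eq_of_forall_not_trans hq] at h₂
    exact absurd h₂ (hq g₂)

end Transitions

namespace BPA

variable {V A : Type*} {rules : V → A → List V → Prop}

theorem trans_cons {X : V} {l : A} {α : List V} (h : rules X l α) (β : List V) :
    BPA.Trans rules (X :: β) l (α ++ β) :=
  ⟨X, α, β, rfl, h, rfl⟩

theorem trans_cons_iff {X : V} {l : A} {β q : List V} :
    BPA.Trans rules (X :: β) l q ↔ ∃ α, rules X l α ∧ q = α ++ β := by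
  constructor
  · rintro ⟨_, α, _, h, hr, rfl⟩
    obtain ⟨rfl, rfl⟩ := List.cons.inj h
    exact ⟨α, hr, rfl⟩
  · rintro ⟨α, hr, rfl⟩
    exact trans_cons hr β

theorem not_trans_nil {l : A} {q : List V} : ¬ BPA.Trans rules [] l q :=
  fun ⟨_, _, _, h, _⟩ => nomatch h

theorem silentStar_append {tau : A} {ζ : List V} (hζ : ∀ X ∈ ζ, rules X tau [])
    (α : List V) : SilentStar (BPA.Trans rules) tau (ζ ++ α) α := by
  induction ζ with
  | nil => exact .refl
  | cons X ζ ih =>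
    exact .head (trans_cons (hζ X List.mem_cons_self) _)
      (ih fun Y hY => hζ Y (List.mem_cons_of_mem X hY))

theorem silentStar_cons {tau : A} {X : V} {β x : List V} (hX : ∀ α, ¬ rules X tau α)
    (h : SilentStar (BPA.Trans rules) tau (X :: β) x) : x = X :: β :=
  h.eq_of_forall_not_trans fun _ hq =>
    let ⟨α, hα, _⟩ := trans_cons_iff.mp hq
    hX α hα

end BPA

namespace Counter

open BPA

variable {n : ℕ}

local notation "Tr" => BPA.Trans (@CRule n)

def zWord (ζ : List (Fin n)) : List (CVar n) :=
  ζ.map (CVar.Z · true)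

def IsBWord (α : List (CVar n)) : Prop :=
  ∀ X ∈ α, ∃ i : Fin n, X = CVar.B i true

theorem silentStar_zWord_append (ζ : List (Fin n)) (α : List (CVar n)) :
    SilentStar Tr CAct.tau (zWord ζ ++ α) α :=
  silentStar_append (by simpa [zWord] using fun i _ => CRule.z_tau i true) α

theorem IsBWord.tail {X : CVar n} {β : List (CVar n)} (h : IsBWord (X :: β)) : IsBWord β :=
  fun Y hY => h Y (List.mem_cons_of_mem X hY)

theorem IsBWord.not_trans_tau {α : List (CVar n)} (hα : IsBWord α) (q : List (CVar n)) :
    ¬ Tr α CAct.tau q := by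
  rcases α with _ | ⟨X, β⟩
  · exact not_trans_nil
  · obtain ⟨i, rfl⟩ := hα X List.mem_cons_self
    rintro h
    obtain ⟨_, hr, -⟩ := trans_cons_iff.mp h
    cases hr

theorem IsBWord.eq_of_silentStar {α x : List (CVar n)} (hα : IsBWord α)
    (h : SilentStar Tr CAct.tau α x) : x = α :=
  h.eq_of_forall_not_trans hα.not_trans_tau

theorem eq_zWord_append_of_silentStar {δ p x : List (CVar n)} (hδ : IsBWord δ)
    (h : SilentStar Tr CAct.tau p x) {ζ : List (Fin n)} (hp : p = zWord ζ ++ δ) :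
    ∃ ζ', x = zWord ζ' ++ δ := by
  induction h using Relation.ReflTransGen.head_induction_on generalizing ζ with
  | refl => exact ⟨ζ, hp⟩
  | head hstep _ ih =>
    subst hp
    rcases ζ with _ | ⟨k, ζ⟩
    · exact absurd hstep (hδ.not_trans_tau _)
    · obtain ⟨_, hr, hq⟩ := trans_cons_iff.mp hstep
      cases hr
      exact ih hq

theorem IsBWord.exists_eq_of_weakTrans_a {δ q : List (CVar n)} {i : Fin n} (hδ : IsBWord δ)
    (hi : CVar.B i true ∉ δ) (h : WeakTrans Tr CAct.tau δ (CAct.a i true) q) :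
    ∃ m β, δ = CVar.B m true :: β ∧ q = CVar.BP m true i true :: β := by
  obtain ⟨g₁, g₂, h₁, h₂, h₃⟩ := h
  rw [hδ.eq_of_silentStar h₁] at h₂
  rcases δ with _ | ⟨X, β⟩
  · exact absurd h₂ not_trans_nil
  obtain ⟨m, rfl⟩ := hδ X List.mem_cons_self
  obtain ⟨_, hr, rfl⟩ := trans_cons_iff.mp h₂
  cases hr with
  | b_self => exact absurd List.mem_cons_self hi
  | b_obs =>
    exact ⟨m, β, rfl, silentStar_cons (fun _ hr => by cases hr) h₃⟩

theorem eq_of_weakTrans_d_zWord_append {m : Fin n} {β q : List (CVar n)} {ζ : List (Fin n)}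
    (hβ : IsBWord (CVar.B m true :: β))
    (h : WeakTrans Tr CAct.tau (zWord ζ ++ CVar.B m true :: β) CAct.d q) : q = β := by
  obtain ⟨g₁, g₂, h₁, h₂, h₃⟩ := h
  obtain ⟨_ | ⟨k, ζ'⟩, rfl⟩ := eq_zWord_append_of_silentStar hβ h₁ rfl
  · obtain ⟨_, hr, rfl⟩ := trans_cons_iff.mp h₂
    cases hr
    exact hβ.tail.eq_of_silentStar h₃
  · obtain ⟨_, hr, -⟩ := trans_cons_iff.mp h₂
    cases hr

theorem not_rel_zWord_cons_append {R : List (CVar n) → List (CVar n) → Prop}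
    (hR : IsWeakBisim Tr CAct.tau R) {i : Fin n} {δ : List (CVar n)} (hδ : IsBWord δ)
    (hi : CVar.B i true ∉ δ) (ζ : List (Fin n)) : ¬ R (zWord (i :: ζ) ++ δ) δ := by
  induction δ generalizing ζ with
  | nil =>
    intro hR₀
    obtain ⟨q, ⟨g₁, g₂, h₁, h₂, -⟩, -⟩ :=
      hR.exists_weakTrans hR₀ (trans_cons (CRule.z_a i true) _) nofun
    rw [hδ.eq_of_silentStar h₁] at h₂
    exact not_trans_nil h₂
  | cons X β ih =>
    intro hR₀
    obtain ⟨q, hq, hR₁⟩ :=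
      hR.exists_weakTrans hR₀ (trans_cons (CRule.z_a i true) _) nofun
    obtain ⟨m, β, ⟨rfl, rfl⟩, rfl⟩ := hδ.exists_eq_of_weakTrans_a hi hq
    have hmi : i ≠ m := fun h => hi (h ▸ List.mem_cons_self)
    obtain ⟨q', hq', hR₂⟩ :=
      hR.exists_weakTrans (hR.1 hR₁) (trans_cons (CRule.bp_d m true i true hmi) _)
        nofun
    rw [eq_of_weakTrans_d_zWord_append hδ hq'] at hR₂
    exact ih hδ.tail (fun h => hi (List.mem_cons_of_mem _ h)) [] hR₂

theorem mem_of_cWeak_zWord_append {γ : List (CVar n)} {ζ : List (Fin n)} (hγ : IsBWord γ)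
    (h : CWeak (zWord ζ ++ γ) γ) {i : Fin n} (hi : i ∈ ζ) : CVar.B i true ∈ γ := by
  by_contra hiγ
  obtain ⟨R, hR, hR₀⟩ := h
  induction ζ with
  | nil => exact List.not_mem_nil hi
  | cons k ζ ih =>
    by_cases hk : i = k
    · subst hk
      exact not_rel_zWord_cons_append hR hγ hiγ ζ hR₀
    · exact ih (List.mem_of_ne_of_mem hk hi)
        (hR.rel_of_trans_tau hγ.not_trans_tau hR₀ (trans_cons (CRule.z_tau k true) _))

inductive HeadSwap : List (CVar n) → List (CVar n) → Prop
  | refl {α : List (CVar n)} (hα : IsBWord α) : HeadSwap α α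
  | swap {i j : Fin n} {β : List (CVar n)} (hβ : IsBWord β) (hj : CVar.B j true ∈ β)
      (hji : j ≠ i) : HeadSwap (CVar.B i true :: β) (CVar.BP i true j true :: β)

inductive PadRel : List (CVar n) → List (CVar n) → Prop
  | refl (p : List (CVar n)) : PadRel p p
  | pad (ζ : List (Fin n)) {α q : List (CVar n)} (h : HeadSwap α q)
      (hζ : ∀ j ∈ ζ, CVar.B j true ∈ α) : PadRel (zWord ζ ++ α) q

theorem HeadSwap.padRel {α q : List (CVar n)} (h : HeadSwap α q) : PadRel α q :=
  .pad [] h (by simp)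

theorem HeadSwap.exists_trans_a {α q : List (CVar n)} {k : Fin n} (h : HeadSwap α q)
    (hk : CVar.B k true ∈ α) : ∃ q', Tr q (CAct.a k true) q' ∧ HeadSwap α q' := by
  cases h with
  | refl hα =>
    rcases α with _ | ⟨X, β⟩
    · exact absurd hk List.not_mem_nil
    obtain ⟨m, rfl⟩ := hα X List.mem_cons_self
    by_cases hkm : k = m
    · subst hkm
      exact ⟨_, trans_cons (CRule.b_self k true) β, .refl hα⟩
    · have hkβ : CVar.B k true ∈ β := by simpa [hkm] using hk
      exact ⟨_, trans_cons (CRule.b_obs m true k true hkm) β, .swap hα.tail hkβ hkm⟩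
  | @swap i j β hβ hj hji =>
    by_cases hki : k = i
    · subst hki
      exact ⟨_, trans_cons (CRule.bp_self k true j true hji) β, .swap hβ hj hji⟩
    · have hkβ : CVar.B k true ∈ β := by simpa [hki] using hk
      exact ⟨_, trans_cons (CRule.bp_obs i true j true k true hji hki) β,
        .swap hβ hkβ hki⟩

theorem HeadSwap.trans_forth {α q α' : List (CVar n)} {l : CAct n} (h : HeadSwap α q)
    (hα : Tr α l α') : ∃ q', Tr q l q' ∧ Relation.SymmGen PadRel α' q' := by
  cases h with
  | refl => exact ⟨α', hα, .of_rel (.refl α')⟩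
  | @swap i j β hβ hj hji =>
    obtain ⟨_, hr, rfl⟩ := trans_cons_iff.mp hα
    cases hr with
    | b_self =>
      exact ⟨_, trans_cons (CRule.bp_self i true j true hji) β,
        .of_rel (HeadSwap.swap hβ hj hji).padRel⟩
    | b_d =>
      exact ⟨_, trans_cons (CRule.bp_d i true j true hji) β,
        .of_rel_symm (.pad [j] (.refl hβ) (by simpa using hj))⟩
    | b_obs _ _ k b hki =>
      exact ⟨_, trans_cons (CRule.bp_obs i true j true k b hji hki) β, .of_rel (.refl _)⟩

theorem HeadSwap.trans_back {α q q' : List (CVar n)} {l : CAct n} (h : HeadSwap α q)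
    (hq : Tr q l q') : ∃ α', Tr α l α' ∧ Relation.SymmGen PadRel α' q' := by
  cases h with
  | refl => exact ⟨q', hq, .of_rel (.refl q')⟩
  | @swap i j β hβ hj hji =>
    obtain ⟨_, hr, rfl⟩ := trans_cons_iff.mp hq
    cases hr with
    | bp_self =>
      exact ⟨_, trans_cons (CRule.b_self i true) β,
        .of_rel (HeadSwap.swap hβ hj hji).padRel⟩
    | bp_d =>
      exact ⟨_, trans_cons (CRule.b_d i true) β,
        .of_rel_symm (.pad [j] (.refl hβ) (by simpa using hj))⟩
    | bp_obs _ _ _ _ k b _ hki =>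
      exact ⟨_, trans_cons (CRule.b_obs i true k b hki) β, .of_rel (.refl _)⟩

theorem PadRel.answer_forth {p q p' : List (CVar n)} {l : CAct n} (h : PadRel p q)
    (hp : Tr p l p') : BranchingAnswer Tr CAct.tau (Relation.SymmGen PadRel) p l p' q := by
  cases h with
  | refl => exact .of_trans (.of_rel (.refl p)) hp (.of_rel (.refl p'))
  | pad ζ h hζ =>
    rcases ζ with _ | ⟨k, ζ⟩
    · obtain ⟨q', hq', hpq'⟩ := h.trans_forth hp
      exact .of_trans (.of_rel h.padRel) hq' hpq'
    have hζ' : ∀ j ∈ ζ, CVar.B j true ∈ _ := fun j hj => hζ j (List.mem_cons_of_mem k hj)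
    obtain ⟨_, hr, rfl⟩ := trans_cons_iff.mp hp
    cases hr with
    | z_tau => exact Or.inl ⟨rfl, .of_rel (.pad ζ h hζ')⟩
    | z_a =>
      obtain ⟨q', hq', h'⟩ := h.exists_trans_a (hζ k List.mem_cons_self)
      exact .of_trans (.of_rel (.pad (k :: ζ) h hζ)) hq' (.of_rel (.pad ζ h' hζ'))

theorem PadRel.answer_back {p q q' : List (CVar n)} {l : CAct n} (h : PadRel p q)
    (hq : Tr q l q') : BranchingAnswer Tr CAct.tau (Relation.SymmGen PadRel) q l q' p := by
  cases h with
  | refl => exact .of_trans (.of_rel (.refl _)) hq (.of_rel (.refl q'))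
  | pad ζ h _ =>
    obtain ⟨α', hα', hαq'⟩ := h.trans_back hq
    exact Or.inr
      ⟨_, α', silentStar_zWord_append ζ _, hα', .of_rel_symm h.padRel, hαq'.symm⟩

theorem cBisim_zWord_append {γ : List (CVar n)} {ζ : List (Fin n)} (hγ : IsBWord γ)
    (hζ : ∀ j ∈ ζ, CVar.B j true ∈ γ) : CBisim (zWord ζ ++ γ) γ :=
  ⟨_, isBranchingBisim_symmGen PadRel.answer_forth PadRel.answer_back,
    .of_rel (.pad ζ (.refl hγ) hζ)⟩

end Counter

/-- For γ built from the variables B_1^1, …, B_n^1, the following are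
equivalent: (1) Z_1^1…Z_n^1 γ ≃ γ; (2) Z_1^1…Z_n^1 γ ≈ γ;
(3) Var(γ) = { B_1^1, …, B_n^1 }. -/
theorem counter_qsat_test {n : ℕ} (γ : List (CVar n))
    (hγ : ∀ X ∈ γ, ∃ i : Fin n, X = CVar.B i true) :
    (CBisim ((List.ofFn fun i : Fin n => CVar.Z i true) ++ γ) γ ↔
      ∀ i : Fin n, CVar.B i true ∈ γ) ∧
    (CWeak ((List.ofFn fun i : Fin n => CVar.Z i true) ++ γ) γ ↔
      ∀ i : Fin n, CVar.B i true ∈ γ) := by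
  have hword : (List.ofFn fun i : Fin n => CVar.Z i true) = Counter.zWord (List.finRange n) :=
    List.ofFn_eq_map
  rw [hword]
  have h3to1 (h : ∀ i : Fin n, CVar.B i true ∈ γ) :
      CBisim (Counter.zWord (List.finRange n) ++ γ) γ :=
    Counter.cBisim_zWord_append hγ fun j _ => h j
  have h2to3 (h : CWeak (Counter.zWord (List.finRange n) ++ γ) γ) (i : Fin n) :
      CVar.B i true ∈ γ :=
    Counter.mem_of_cWeak_zWord_append hγ h (List.mem_finRange i)
  exact ⟨⟨fun h => h2to3 h.wkBisim, h3to1⟩, ⟨h2to3, fun h => (h3to1 h).wkBisim⟩⟩
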